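/- Let n ≥ 2, m ≥ 2, and let σ : Fin m → Fin n be injective. Define the subcomposition map Sub : Δ°ₙ → Δ°ₘ by Sub(λ) j = λ (σ j) / ∑ k, λ (σ k). Then Sub is linear for the compositional vector space structures: for all λ, μ ∈ Δ°ₙ and c ∈ ℝ, Sub(λ ⊕ μ) = Sub(λ) ⊕ Sub(μ) and Sub(c ⊙ λ) = c ⊙ Sub(λ), where on the left ⊕ and ⊙ are the perturbation and powering of Δ°ₙ and on the right those of Δ°ₘ. -/

import Mathlib

/-!
Perturbation, powering and subcomposition all normalise a vector by its total, and
normalisation forgets positive scalar factors. Hence both sides of each identity are the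
normalisation of the same unnormalised vector: `k ↦ λ (σ k) * μ (σ k)` for perturbation and
`k ↦ λ (σ k) ^ c` for powering.
-/

open Real Finset

/-- The open probability simplex. -/
def simplex' (d : ℕ) : Set (Fin d → ℝ) :=
  {l | (∀ i, 0 < l i) ∧ ∑ i, l i = 1}

/-- The perturbation operation on the open simplex. -/
noncomputable def pert (d : ℕ) (l m : Fin d → ℝ) : Fin d → ℝ :=
  fun i => l i * m i / ∑ j, l j * m j

/-- The powering operation on the open simplex (real powers via `Real.rpow`). -/
noncomputable def spow (d : ℕ) (c : ℝ) (l : Fin d → ℝ) : Fin d → ℝ :=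
  fun i => l i ^ c / ∑ j, l j ^ c

/-- The subcomposition map `Sub : Δ°ₙ → Δ°ₘ` along an injective selection `σ`. -/
noncomputable def subc (n m : ℕ) (σ : Fin m → Fin n) (l : Fin n → ℝ) : Fin m → ℝ :=
  fun j => l (σ j) / ∑ k, l (σ k)

lemma sum_pos_of_forall_pos {d : ℕ} (hd : 0 < d) {f : Fin d → ℝ} (hf : ∀ i, 0 < f i) :
    0 < ∑ i, f i :=
  Finset.sum_pos (fun i _ => hf i) ⟨⟨0, hd⟩, Finset.mem_univ _⟩

lemma pert_eq_inv_mul (d : ℕ) (l μ : Fin d → ℝ) :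
    pert d l μ = fun i => (∑ j, l j * μ j)⁻¹ * (l i * μ i) :=
  funext fun _ => div_eq_inv_mul _ _

lemma spow_eq_inv_mul (d : ℕ) (c : ℝ) (l : Fin d → ℝ) :
    spow d c l = fun i => (∑ j, l j ^ c)⁻¹ * l i ^ c :=
  funext fun _ => div_eq_inv_mul _ _

lemma subc_eq_inv_mul (n m : ℕ) (σ : Fin m → Fin n) (l : Fin n → ℝ) :
    subc n m σ l = fun j => (∑ k, l (σ k))⁻¹ * l (σ j) :=
  funext fun _ => div_eq_inv_mul _ _

lemma subc_const_mul (n m : ℕ) (σ : Fin m → Fin n) (l : Fin n → ℝ) {a : ℝ} (ha : a ≠ 0) :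
    subc n m σ (fun i => a * l i) = subc n m σ l := by
  funext j
  simp only [subc, ← Finset.mul_sum]
  exact mul_div_mul_left _ _ ha

lemma pert_const_mul (d : ℕ) (l μ : Fin d → ℝ) {a b : ℝ} (ha : a ≠ 0) (hb : b ≠ 0) :
    pert d (fun i => a * l i) (fun i => b * μ i) = pert d l μ := by
  funext i
  have hmul : ∀ j, a * l j * (b * μ j) = a * b * (l j * μ j) := fun j => by ring
  simp only [pert, hmul, ← Finset.mul_sum]
  exact mul_div_mul_left _ _ (mul_ne_zero ha hb)

lemma spow_const_mul (d : ℕ) (c : ℝ) {l : Fin d → ℝ} (hl : ∀ i, 0 ≤ l i) {a : ℝ} (ha : 0 < a) :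
    spow d c (fun i => a * l i) = spow d c l := by
  funext i
  simp only [spow, Real.mul_rpow ha.le (hl _), ← Finset.mul_sum]
  exact mul_div_mul_left _ _ (Real.rpow_pos_of_pos ha c).ne'

lemma subc_mul (n m : ℕ) (σ : Fin m → Fin n) (l μ : Fin n → ℝ) :
    subc n m σ (fun i => l i * μ i) = pert m (fun j => l (σ j)) (fun j => μ (σ j)) :=
  rfl

lemma subc_rpow (n m : ℕ) (σ : Fin m → Fin n) (c : ℝ) (l : Fin n → ℝ) :
    subc n m σ (fun i => l i ^ c) = spow m c (fun j => l (σ j)) :=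
  rfl

theorem stmt14_general (n m : ℕ) (hn : 2 ≤ n) (hm : 2 ≤ m)
    (σ : Fin m → Fin n)
    (l μ : Fin n → ℝ) (hl : l ∈ simplex' n) (hμ : μ ∈ simplex' n) (c : ℝ) :
    subc n m σ (pert n l μ) = pert m (subc n m σ l) (subc n m σ μ) ∧
    subc n m σ (spow n c l) = spow m c (subc n m σ l) := by
  obtain ⟨hlpos, -⟩ := hl
  obtain ⟨hμpos, -⟩ := hμ
  have hlμ : 0 < ∑ j, l j * μ j :=
    sum_pos_of_forall_pos (by omega) fun j => mul_pos (hlpos j) (hμpos j)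
  have hlc : 0 < ∑ j, l j ^ c :=
    sum_pos_of_forall_pos (by omega) fun j => Real.rpow_pos_of_pos (hlpos j) c
  have hlσ : 0 < ∑ k, l (σ k) := sum_pos_of_forall_pos (by omega) fun k => hlpos (σ k)
  have hμσ : 0 < ∑ k, μ (σ k) := sum_pos_of_forall_pos (by omega) fun k => hμpos (σ k)
  constructor
  · rw [pert_eq_inv_mul n, subc_const_mul _ _ _ _ (inv_ne_zero hlμ.ne'), subc_mul,
      subc_eq_inv_mul, subc_eq_inv_mul,
      pert_const_mul _ _ _ (inv_ne_zero hlσ.ne') (inv_ne_zero hμσ.ne')]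
  · rw [spow_eq_inv_mul n, subc_const_mul _ _ _ _ (inv_ne_zero hlc.ne'), subc_rpow,
      subc_eq_inv_mul, spow_const_mul _ _ (fun k => (hlpos (σ k)).le) (inv_pos.2 hlσ)]

/-- the subcomposition map is linear for the compositional vector
space structures: it commutes with perturbation and with powering. -/
theorem stmt14 (n m : ℕ) (hn : 2 ≤ n) (hm : 2 ≤ m)
    (σ : Fin m → Fin n) (hσ : Function.Injective σ)
    (l μ : Fin n → ℝ) (hl : l ∈ simplex' n) (hμ : μ ∈ simplex' n) (c : ℝ) :
    subc n m σ (pert n l μ) = pert m (subc n m σ l) (subc n m σ μ) ∧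
    subc n m σ (spow n c l) = spow m c (subc n m σ l) :=
  stmt14_general n m hn hm σ l μ hl hμ c
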